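/- arXiv:2310.09860 — 2 statements merged into one kernel-verified Lean document; each statement's English description precedes it below -/
import Mathlib

section
/- Let S(2) = ⟨S, →⟩ be the dense local order with S = { e^{qi} : q ∈ ℚ }, and let A = { e^{qi} : q ∈ ⋃_k (π/2 + 2kπ, 3π/2 + 2kπ) ∩ ℚ } and B = S \ A. Define ρ on S by: x ρ y iff (x, y both in A or both in B, and x → y) or (x, y in different parts and y → x). Then ρ is a strict linear order on S which is dense and has no endpoints, and both A and B are dense subsets of ⟨S, ρ⟩. -/
/-- Points of the unit circle with rational angle. -/
def Scirc : Set ℂ := {z | ∃ q : ℚ, z = Complex.exp (q * Complex.I)}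

/-- The dense local order relation: `e^{q₁i} → e^{q₂i}` iff
`q₂ - q₁ ∈ ⋃_{k∈ℤ} (2kπ, 2kπ + π)`. -/
def Arrow2 (x y : ℂ) : Prop :=
  ∃ q₁ q₂ : ℚ, x = Complex.exp (q₁ * Complex.I) ∧ y = Complex.exp (q₂ * Complex.I) ∧
    ∃ k : ℤ, 2 * (k : ℝ) * Real.pi < (q₂ : ℝ) - (q₁ : ℝ) ∧
      (q₂ : ℝ) - (q₁ : ℝ) < 2 * (k : ℝ) * Real.pi + Real.pi

/-- The left half-circle: points with angle in `⋃_k (π/2 + 2kπ, 3π/2 + 2kπ)`. -/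
def PartA : Set ℂ :=
  {z | ∃ q : ℚ, z = Complex.exp (q * Complex.I) ∧
    ∃ k : ℤ, Real.pi / 2 + 2 * (k : ℝ) * Real.pi < (q : ℝ) ∧
      (q : ℝ) < 3 * Real.pi / 2 + 2 * (k : ℝ) * Real.pi}

/-- The right half-circle. -/
def PartB : Set ℂ := Scirc \ PartA

/-- The linear order `ρ`: agrees with `→` inside each part and with `→⁻¹`
across the two parts. -/
def Rho (x y : ℂ) : Prop :=
  (((x ∈ PartA ∧ y ∈ PartA) ∨ (x ∈ PartB ∧ y ∈ PartB)) ∧ Arrow2 x y) ∨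
  (((x ∈ PartA ∧ y ∈ PartB) ∨ (x ∈ PartB ∧ y ∈ PartA)) ∧ Arrow2 y x)


noncomputable def mq (q : ℚ) : ℝ := (q:ℝ) - ⌊(q:ℝ)/(2*Real.pi)⌋ * (2*Real.pi)

lemma two_pi_pos : (0:ℝ) < 2*Real.pi := by positivity

lemma mq_nonneg (q : ℚ) : 0 ≤ mq q := Int.sub_floor_div_mul_nonneg (q:ℝ) two_pi_pos

lemma mq_lt (q : ℚ) : mq q < 2*Real.pi := Int.sub_floor_div_mul_lt (q:ℝ) two_pi_pos

lemma mq_spec (q : ℚ) : ∃ k : ℤ, (q:ℝ) = mq q + 2*(k:ℝ)*Real.pi := by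
  refine ⟨⌊(q:ℝ)/(2*Real.pi)⌋, ?_⟩
  unfold mq; ring

lemma rat_ne_mul_pi (q a : ℚ) (ha : a ≠ 0) : (q:ℝ) ≠ (a:ℝ) * Real.pi := by
  intro h
  apply irrational_pi
  refine ⟨q / a, ?_⟩
  push_cast
  field_simp
  linarith [h]

lemma exp_rat_inj {q₁ q₂ : ℚ} (h : Complex.exp (q₁*Complex.I) = Complex.exp (q₂*Complex.I)) : q₁ = q₂ := by
  rw [Complex.exp_eq_exp_iff_exists_int] at h
  obtain ⟨n, hn⟩ := h
  have h2 : (q₁:ℝ) = q₂ + n*(2*Real.pi) := by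
    have := congrArg Complex.im hn
    simpa using this
  by_cases hn0 : n = 0
  · subst hn0; simp at h2; exact_mod_cast h2
  · exfalso
    apply rat_ne_mul_pi (q₁ - q₂) (2*n) (by exact_mod_cast mul_ne_zero two_ne_zero hn0)
    push_cast
    linarith


lemma mq_ne_half (q : ℚ) : mq q ≠ Real.pi/2 := by
  intro h
  obtain ⟨k, e⟩ := mq_spec q
  apply rat_ne_mul_pi q (1/2 + 2*k) ?_
  · push_cast; rw [e, h]; ring
  · intro h2
    have h3 : (1:ℚ) + 4*k = 0 := by linarith [h2]
    have : (1:ℤ) + 4*k = 0 := by exact_mod_cast h3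
    omega

lemma mq_ne_threehalf (q : ℚ) : mq q ≠ 3*Real.pi/2 := by
  intro h
  obtain ⟨k, e⟩ := mq_spec q
  apply rat_ne_mul_pi q (3/2 + 2*k) ?_
  · push_cast; rw [e, h]; ring
  · intro h2
    have h3 : (3:ℚ) + 4*k = 0 := by linarith [h2]
    have : (3:ℤ) + 4*k = 0 := by exact_mod_cast h3
    omega

lemma mq_sub_ne_pi (q₁ q₂ : ℚ) : mq q₁ - mq q₂ ≠ Real.pi := by
  intro h
  obtain ⟨k₁, e₁⟩ := mq_spec q₁
  obtain ⟨k₂, e₂⟩ := mq_spec q₂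
  apply rat_ne_mul_pi (q₁ - q₂) (1 + 2*(k₁ - k₂)) ?_
  · push_cast; rw [e₁, e₂]; linarith
  · intro h2
    have : (1:ℤ) + 2*(k₁-k₂) = 0 := by exact_mod_cast h2
    omega

lemma mq_inj {q₁ q₂ : ℚ} (h : mq q₁ = mq q₂) : q₁ = q₂ := by
  obtain ⟨k₁, e₁⟩ := mq_spec q₁
  obtain ⟨k₂, e₂⟩ := mq_spec q₂
  by_cases hk : k₁ = k₂
  · subst hk
    have : (q₁:ℝ) = q₂ := by rw [e₁, e₂, h]
    exact_mod_cast this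
  · exfalso
    apply rat_ne_mul_pi (q₁ - q₂) (2*(k₁ - k₂)) ?_
    · push_cast; rw [e₁, e₂, h]; ring
    · intro h2
      have : 2*(k₁-k₂) = (0:ℤ) := by exact_mod_cast h2
      omega

lemma arrow_iff (q₁ q₂ : ℚ) :
    Arrow2 (Complex.exp (q₁*Complex.I)) (Complex.exp (q₂*Complex.I)) ↔
    (0 < mq q₂ - mq q₁ ∧ mq q₂ - mq q₁ < Real.pi) ∨ mq q₂ - mq q₁ < -Real.pi := by
  obtain ⟨k₁, e₁⟩ := mq_spec q₁
  obtain ⟨k₂, e₂⟩ := mq_spec q₂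
  have b₁ := mq_nonneg q₁; have b₂ := mq_lt q₁
  have b₃ := mq_nonneg q₂; have b₄ := mq_lt q₂
  have hπ := Real.pi_pos
  constructor
  · rintro ⟨a, b, ha, hb, k, h1, h2⟩
    obtain rfl := exp_rat_inj ha
    obtain rfl := exp_rat_inj hb
    set j : ℤ := k + k₁ - k₂ with hj
    have hj1 : 2*(j:ℝ)*Real.pi < mq q₂ - mq q₁ := by push_cast [hj]; linarith
    have hj2 : mq q₂ - mq q₁ < 2*(j:ℝ)*Real.pi + Real.pi := by push_cast [hj]; linarith
    have hjlt : (j:ℝ) < 1 := by nlinarith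
    have hjgt : (-2:ℝ) < (j:ℝ) := by nlinarith
    have hj0 : j = 0 ∨ j = -1 := by
      have h1' : j < 1 := by exact_mod_cast hjlt
      have h2' : (-2:ℤ) < j := by exact_mod_cast hjgt
      omega
    rcases hj0 with h0 | h0 <;> rw [h0] at hj1 hj2 <;> push_cast at hj1 hj2
    · left; constructor <;> linarith
    · right; linarith
  · rintro (⟨h1, h2⟩ | h)
    · exact ⟨q₁, q₂, rfl, rfl, k₂ - k₁, by push_cast; constructor <;> linarith⟩
    · exact ⟨q₁, q₂, rfl, rfl, k₂ - k₁ - 1, by push_cast; constructor <;> linarith⟩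

lemma partA_iff (q : ℚ) :
    Complex.exp (q*Complex.I) ∈ PartA ↔ Real.pi/2 < mq q ∧ mq q < 3*Real.pi/2 := by
  obtain ⟨k₀, e⟩ := mq_spec q
  have b₁ := mq_nonneg q; have b₂ := mq_lt q
  have hπ := Real.pi_pos
  constructor
  · rintro ⟨a, ha, k, h1, h2⟩
    obtain rfl := exp_rat_inj ha
    set j : ℤ := k - k₀ with hj
    have hj1 : Real.pi/2 + 2*(j:ℝ)*Real.pi < mq q := by push_cast [hj]; linarith
    have hj2 : mq q < 3*Real.pi/2 + 2*(j:ℝ)*Real.pi := by push_cast [hj]; linarith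
    have hjlt : (j:ℝ) < 1 := by nlinarith
    have hjgt : (-1:ℝ) < (j:ℝ) := by nlinarith
    have hj0 : j = 0 := by
      have h1' : j < 1 := by exact_mod_cast hjlt
      have h2' : (-1:ℤ) < j := by exact_mod_cast hjgt
      omega
    rw [hj0] at hj1 hj2
    push_cast at hj1 hj2
    constructor <;> linarith
  · rintro ⟨h1, h2⟩
    exact ⟨q, rfl, k₀, by constructor <;> linarith⟩

lemma partB_iff (q : ℚ) :
    Complex.exp (q*Complex.I) ∈ PartB ↔ mq q < Real.pi/2 ∨ 3*Real.pi/2 < mq q := by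
  have h1 := mq_ne_half q
  have h2 := mq_ne_threehalf q
  rw [PartB, Set.mem_diff]
  simp only [partA_iff]
  constructor
  · rintro ⟨_, h⟩
    rcases lt_or_gt_of_ne h1 with h' | h'
    · exact Or.inl h'
    · rcases lt_or_gt_of_ne h2 with h'' | h''
      · exact absurd ⟨h', h''⟩ h
      · exact Or.inr h''
  · intro h
    refine ⟨⟨q, rfl⟩, ?_⟩
    rintro ⟨ha, hb⟩
    rcases h with h | h <;> linarith

noncomputable def fq (q : ℚ) : ℝ :=
  if mq q < Real.pi/2 then mq q + Real.pi
  else if mq q < 3*Real.pi/2 then mq q else mq q - Real.pi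

lemma fq_low {q : ℚ} (h : mq q < Real.pi/2) : fq q = mq q + Real.pi := by
  unfold fq; rw [if_pos h]

lemma fq_mid {q : ℚ} (h1 : Real.pi/2 < mq q) (h2 : mq q < 3*Real.pi/2) : fq q = mq q := by
  unfold fq; rw [if_neg (by linarith), if_pos h2]

lemma fq_high {q : ℚ} (h : 3*Real.pi/2 < mq q) : fq q = mq q - Real.pi := by
  have hπ := Real.pi_pos
  unfold fq; rw [if_neg (by linarith), if_neg (by linarith)]

lemma mq_tri (q : ℚ) :
    mq q < Real.pi/2 ∨ (Real.pi/2 < mq q ∧ mq q < 3*Real.pi/2) ∨ 3*Real.pi/2 < mq q := by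
  rcases lt_or_gt_of_ne (mq_ne_half q) with h | h
  · exact Or.inl h
  · rcases lt_or_gt_of_ne (mq_ne_threehalf q) with h' | h'
    · exact Or.inr (Or.inl ⟨h, h'⟩)
    · exact Or.inr (Or.inr h')

lemma fq_bounds (q : ℚ) : Real.pi/2 < fq q ∧ fq q < 3*Real.pi/2 := by
  have b₁ := mq_nonneg q; have b₂ := mq_lt q
  have hπ := Real.pi_pos
  rcases mq_tri q with h | ⟨h1, h2⟩ | h
  · rw [fq_low h]; constructor <;> linarith
  · rw [fq_mid h1 h2]; constructor <;> linarith
  · rw [fq_high h]; constructor <;> linarith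

set_option maxHeartbeats 2000000 in
lemma rho_iff (q₁ q₂ : ℚ) :
    Rho (Complex.exp (q₁*Complex.I)) (Complex.exp (q₂*Complex.I)) ↔ fq q₁ < fq q₂ := by
  have b₁ := mq_nonneg q₁; have b₂ := mq_lt q₁
  have b₃ := mq_nonneg q₂; have b₄ := mq_lt q₂
  have hπ := Real.pi_pos
  simp only [Rho, partA_iff, partB_iff, arrow_iff]
  rcases mq_tri q₁ with h₁ | ⟨h₁, h₁'⟩ | h₁ <;> rcases mq_tri q₂ with h₂ | ⟨h₂, h₂'⟩ | h₂
  · rw [fq_low h₁, fq_low h₂]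
    constructor
    · rintro (⟨⟨⟨a1,a2⟩,a3,a4⟩|⟨b1|b1, b2|b2⟩, ⟨c1,c2⟩|c1⟩ |
        ⟨⟨⟨a1,a2⟩,(b1|b1)⟩|⟨(b1|b1),a1,a2⟩, ⟨c1,c2⟩|c1⟩) <;> linarith
    · intro h
      exact Or.inl ⟨Or.inr ⟨Or.inl h₁, Or.inl h₂⟩, Or.inl ⟨by linarith, by linarith⟩⟩
  · rw [fq_low h₁, fq_mid h₂ h₂']
    constructor
    · rintro (⟨⟨⟨a1,a2⟩,a3,a4⟩|⟨b1|b1, b2|b2⟩, ⟨c1,c2⟩|c1⟩ |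
        ⟨⟨⟨a1,a2⟩,(b1|b1)⟩|⟨(b1|b1),a1,a2⟩, ⟨c1,c2⟩|c1⟩) <;> linarith
    · intro h
      exact Or.inr ⟨Or.inr ⟨Or.inl h₁, h₂, h₂'⟩, Or.inr (by linarith)⟩
  · rw [fq_low h₁, fq_high h₂]
    constructor
    · rintro (⟨⟨⟨a1,a2⟩,a3,a4⟩|⟨b1|b1, b2|b2⟩, ⟨c1,c2⟩|c1⟩ |
        ⟨⟨⟨a1,a2⟩,(b1|b1)⟩|⟨(b1|b1),a1,a2⟩, ⟨c1,c2⟩|c1⟩) <;> linarith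
    · intro h; exfalso; linarith
  · rw [fq_mid h₁ h₁', fq_low h₂]
    constructor
    · rintro (⟨⟨⟨a1,a2⟩,a3,a4⟩|⟨b1|b1, b2|b2⟩, ⟨c1,c2⟩|c1⟩ |
        ⟨⟨⟨a1,a2⟩,(b1|b1)⟩|⟨(b1|b1),a1,a2⟩, ⟨c1,c2⟩|c1⟩) <;> linarith
    · intro h
      exact Or.inr ⟨Or.inl ⟨⟨h₁, h₁'⟩, Or.inl h₂⟩, Or.inl ⟨by linarith, by linarith⟩⟩
  · rw [fq_mid h₁ h₁', fq_mid h₂ h₂']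
    constructor
    · rintro (⟨⟨⟨a1,a2⟩,a3,a4⟩|⟨b1|b1, b2|b2⟩, ⟨c1,c2⟩|c1⟩ |
        ⟨⟨⟨a1,a2⟩,(b1|b1)⟩|⟨(b1|b1),a1,a2⟩, ⟨c1,c2⟩|c1⟩) <;> linarith
    · intro h
      exact Or.inl ⟨Or.inl ⟨⟨h₁, h₁'⟩, h₂, h₂'⟩, Or.inl ⟨by linarith, by linarith⟩⟩
  · rw [fq_mid h₁ h₁', fq_high h₂]
    constructor
    · rintro (⟨⟨⟨a1,a2⟩,a3,a4⟩|⟨b1|b1, b2|b2⟩, ⟨c1,c2⟩|c1⟩ |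
        ⟨⟨⟨a1,a2⟩,(b1|b1)⟩|⟨(b1|b1),a1,a2⟩, ⟨c1,c2⟩|c1⟩) <;> linarith
    · intro h
      exact Or.inr ⟨Or.inl ⟨⟨h₁, h₁'⟩, Or.inr h₂⟩, Or.inr (by linarith)⟩
  · rw [fq_high h₁, fq_low h₂]
    constructor
    · rintro (⟨⟨⟨a1,a2⟩,a3,a4⟩|⟨b1|b1, b2|b2⟩, ⟨c1,c2⟩|c1⟩ |
        ⟨⟨⟨a1,a2⟩,(b1|b1)⟩|⟨(b1|b1),a1,a2⟩, ⟨c1,c2⟩|c1⟩) <;> linarith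
    · intro h
      exact Or.inl ⟨Or.inr ⟨Or.inr h₁, Or.inl h₂⟩, Or.inr (by linarith)⟩
  · rw [fq_high h₁, fq_mid h₂ h₂']
    constructor
    · rintro (⟨⟨⟨a1,a2⟩,a3,a4⟩|⟨b1|b1, b2|b2⟩, ⟨c1,c2⟩|c1⟩ |
        ⟨⟨⟨a1,a2⟩,(b1|b1)⟩|⟨(b1|b1),a1,a2⟩, ⟨c1,c2⟩|c1⟩) <;> linarith
    · intro h
      exact Or.inr ⟨Or.inr ⟨Or.inr h₁, h₂, h₂'⟩, Or.inl ⟨by linarith, by linarith⟩⟩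
  · rw [fq_high h₁, fq_high h₂]
    constructor
    · rintro (⟨⟨⟨a1,a2⟩,a3,a4⟩|⟨b1|b1, b2|b2⟩, ⟨c1,c2⟩|c1⟩ |
        ⟨⟨⟨a1,a2⟩,(b1|b1)⟩|⟨(b1|b1),a1,a2⟩, ⟨c1,c2⟩|c1⟩) <;> linarith
    · intro h
      exact Or.inl ⟨Or.inr ⟨Or.inr h₁, Or.inr h₂⟩, Or.inl ⟨by linarith, by linarith⟩⟩

lemma fq_inj {q₁ q₂ : ℚ} (h : fq q₁ = fq q₂) : q₁ = q₂ := by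
  have b₁ := mq_nonneg q₁; have b₂ := mq_lt q₁
  have b₃ := mq_nonneg q₂; have b₄ := mq_lt q₂
  have hπ := Real.pi_pos
  have n₁ := mq_sub_ne_pi q₁ q₂
  have n₂ := mq_sub_ne_pi q₂ q₁
  rcases mq_tri q₁ with h₁ | ⟨h₁, h₁'⟩ | h₁ <;> rcases mq_tri q₂ with h₂ | ⟨h₂, h₂'⟩ | h₂
  · rw [fq_low h₁, fq_low h₂] at h; exact mq_inj (by linarith)
  · rw [fq_low h₁, fq_mid h₂ h₂'] at h; exact absurd (by linarith : mq q₂ - mq q₁ = Real.pi) n₂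
  · rw [fq_low h₁, fq_high h₂] at h; exfalso; linarith
  · rw [fq_mid h₁ h₁', fq_low h₂] at h; exact absurd (by linarith : mq q₁ - mq q₂ = Real.pi) n₁
  · rw [fq_mid h₁ h₁', fq_mid h₂ h₂'] at h; exact mq_inj h
  · rw [fq_mid h₁ h₁', fq_high h₂] at h; exact absurd (by linarith : mq q₂ - mq q₁ = Real.pi) n₂
  · rw [fq_high h₁, fq_low h₂] at h; exfalso; linarith
  · rw [fq_high h₁, fq_mid h₂ h₂'] at h; exact absurd (by linarith : mq q₁ - mq q₂ = Real.pi) n₁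
  · rw [fq_high h₁, fq_high h₂] at h; exact mq_inj (by linarith)

lemma mq_eq_self {r : ℚ} (h0 : 0 ≤ (r:ℝ)) (h2 : (r:ℝ) < 2*Real.pi) : mq r = (r:ℝ) := by
  have : ⌊(r:ℝ)/(2*Real.pi)⌋ = 0 := by
    rw [Int.floor_eq_zero_iff]
    constructor
    · positivity
    · rw [div_lt_one two_pi_pos]; exact h2
  unfold mq; rw [this]; simp

lemma mq_eq_neg {r : ℚ} (h0 : -(2*Real.pi) ≤ (r:ℝ)) (h2 : (r:ℝ) < 0) : mq r = (r:ℝ) + 2*Real.pi := by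
  have : ⌊(r:ℝ)/(2*Real.pi)⌋ = -1 := by
    rw [Int.floor_eq_iff]
    push_cast
    constructor
    · rw [le_div_iff₀ two_pi_pos]; linarith
    · rw [div_lt_iff₀ two_pi_pos]; linarith
  unfold mq; rw [this]; push_cast; ring

/-- key: a rational in (π/2, 3π/2) gives a point of PartA with that fq value -/
lemma exists_partA {a b : ℝ} (hab : a < b) (ha : Real.pi/2 ≤ a) (hb : b ≤ 3*Real.pi/2) :
    ∃ r : ℚ, Complex.exp (r*Complex.I) ∈ PartA ∧ a < fq r ∧ fq r < b := by
  have hπ := Real.pi_pos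
  obtain ⟨r, hr1, hr2⟩ := exists_rat_btwn hab
  have h0 : 0 ≤ (r:ℝ) := by linarith
  have h2 : (r:ℝ) < 2*Real.pi := by linarith
  have hm : mq r = (r:ℝ) := mq_eq_self h0 h2
  have hf : fq r = (r:ℝ) := by rw [fq_mid (by rw [hm]; linarith) (by rw [hm]; linarith), hm]
  exact ⟨r, (partA_iff r).mpr ⟨by rw [hm]; linarith, by rw [hm]; linarith⟩, by rw [hf]; exact hr1, by rw [hf]; exact hr2⟩

lemma exists_partB {a b : ℝ} (hab : a < b) (ha : Real.pi/2 ≤ a) (hb : b ≤ 3*Real.pi/2) :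
    ∃ r : ℚ, Complex.exp (r*Complex.I) ∈ PartB ∧ a < fq r ∧ fq r < b := by
  have hπ := Real.pi_pos
  obtain ⟨r, hr1, hr2⟩ := exists_rat_btwn (show a - Real.pi < b - Real.pi by linarith)
  have hlo : -(Real.pi/2) ≤ (r:ℝ) - 0 := by linarith
  rcases le_or_gt 0 (r:ℝ) with h0 | h0
  · have hm : mq r = (r:ℝ) := mq_eq_self h0 (by linarith)
    have hmlt : mq r < Real.pi/2 := by rw [hm]; linarith
    have hf : fq r = (r:ℝ) + Real.pi := by rw [fq_low hmlt, hm]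
    exact ⟨r, (partB_iff r).mpr (Or.inl hmlt), by rw [hf]; linarith, by rw [hf]; linarith⟩
  · have hm : mq r = (r:ℝ) + 2*Real.pi := mq_eq_neg (by linarith) h0
    have hmgt : 3*Real.pi/2 < mq r := by rw [hm]; linarith
    have hf : fq r = (r:ℝ) + Real.pi := by rw [fq_high hmgt, hm]; ring
    exact ⟨r, (partB_iff r).mpr (Or.inr hmgt), by rw [hf]; linarith, by rw [hf]; linarith⟩

/-- `ρ` is a dense strict linear order on `S` without endpoints,
and `A`, `B` are dense subsets of `⟨S, ρ⟩`. -/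
theorem rho_dense_linear_order :
    (∀ x ∈ Scirc, ¬ Rho x x) ∧
    (∀ x ∈ Scirc, ∀ y ∈ Scirc, ∀ z ∈ Scirc, Rho x y → Rho y z → Rho x z) ∧
    (∀ x ∈ Scirc, ∀ y ∈ Scirc, x ≠ y → Rho x y ∨ Rho y x) ∧
    (∀ x ∈ Scirc, ∀ y ∈ Scirc, Rho x y → ∃ z ∈ Scirc, Rho x z ∧ Rho z y) ∧
    (∀ x ∈ Scirc, (∃ y ∈ Scirc, Rho x y) ∧ (∃ y ∈ Scirc, Rho y x)) ∧
    (∀ x ∈ Scirc, ∀ y ∈ Scirc, Rho x y → ∃ z ∈ PartA, Rho x z ∧ Rho z y) ∧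
    (∀ x ∈ Scirc, ∀ y ∈ Scirc, Rho x y → ∃ z ∈ PartB, Rho x z ∧ Rho z y) := by
  refine ⟨?_, ?_, ?_, ?_, ?_, ?_, ?_⟩
  · rintro x ⟨q, rfl⟩
    rw [rho_iff]; exact lt_irrefl _
  · rintro x ⟨q₁, rfl⟩ y ⟨q₂, rfl⟩ z ⟨q₃, rfl⟩ h1 h2
    rw [rho_iff] at h1 h2 ⊢; exact lt_trans h1 h2
  · rintro x ⟨q₁, rfl⟩ y ⟨q₂, rfl⟩ hne
    rw [rho_iff, rho_iff]
    rcases lt_trichotomy (fq q₁) (fq q₂) with h | h | h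
    · exact Or.inl h
    · exact absurd (by rw [fq_inj h]) hne
    · exact Or.inr h
  · rintro x ⟨q₁, rfl⟩ y ⟨q₂, rfl⟩ h
    rw [rho_iff] at h
    obtain ⟨r, _, h1, h2⟩ := exists_partA h (fq_bounds q₁).1.le (fq_bounds q₂).2.le
    exact ⟨_, ⟨r, rfl⟩, (rho_iff _ _).mpr h1, (rho_iff _ _).mpr h2⟩
  · rintro x ⟨q, rfl⟩
    constructor
    · obtain ⟨r, _, h1, _⟩ := exists_partA (fq_bounds q).2 (fq_bounds q).1.le le_rfl
      exact ⟨_, ⟨r, rfl⟩, (rho_iff _ _).mpr h1⟩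
    · obtain ⟨r, _, _, h2⟩ := exists_partA (fq_bounds q).1 le_rfl (fq_bounds q).2.le
      exact ⟨_, ⟨r, rfl⟩, (rho_iff _ _).mpr h2⟩
  · rintro x ⟨q₁, rfl⟩ y ⟨q₂, rfl⟩ h
    rw [rho_iff] at h
    obtain ⟨r, hA, h1, h2⟩ := exists_partA h (fq_bounds q₁).1.le (fq_bounds q₂).2.le
    exact ⟨_, hA, (rho_iff _ _).mpr h1, (rho_iff _ _).mpr h2⟩
  · rintro x ⟨q₁, rfl⟩ y ⟨q₂, rfl⟩ h
    rw [rho_iff] at h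
    obtain ⟨r, hB, h1, h2⟩ := exists_partB h (fq_bounds q₁).1.le (fq_bounds q₂).2.le
    exact ⟨_, hB, (rho_iff _ _).mpr h1, (rho_iff _ _).mpr h2⟩
end

section
/- Let S(2) = ⟨S, →⟩ be the dense local order with partition {A, B} and associated linear order ρ. If D ⊆ S is such that ⟨D, → ↾ D⟩ is an elementary substructure of S(2), then ⟨D, ρ ↾ D⟩ is a dense linear order, and A ∩ D and B ∩ D are dense subsets of it. -/
attribute [local instance] Classical.propDecidable

/-- Satisfaction of a quantifier-free formula in the three variables `u, v, w`
of the language `{R}`: such a formula is (equivalent to) a Boolean combination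
of the nine atoms `R(t_i, t_j)`, i.e. it is coded by a Boolean function `θ`. -/
noncomputable def QFSat (θ : (Fin 3 → Fin 3 → Bool) → Bool) (x y z : ℂ) : Prop :=
  θ (fun i j => decide (Arrow2 (![x, y, z] i) (![x, y, z] j))) = true

/-- The Tarski–Vaught consequence of `⟨D, →↾D⟩ ≺ S(2)`: for every
quantifier-free formula `θ(u,v,w)` of the language `{R}` and all `x, y ∈ D`,
if some `s ∈ S` satisfies `θ(x,y,s)` then some `z ∈ D` does. -/
def TarskiVaught2 (D : Set ℂ) : Prop :=
  ∀ (θ : (Fin 3 → Fin 3 → Bool) → Bool), ∀ x ∈ D, ∀ y ∈ D,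
    (∃ s ∈ Scirc, QFSat θ x y s) → ∃ z ∈ D, QFSat θ x y z

/-! Write a rational angle as `q = (n + t) π` with `n ∈ ℤ` and `|t| < 1/2`; since `π` is
irrational, `t` never equals `±1/2` and determines `q`. Then `e^{qi} ∈ A` iff `n` is odd, `ρ` is
the order of the offsets `t`, and `e^{ai} → e^{bi}` iff (`t_a < t_b` iff `n_b - n_a` is even), so
`S` is `ρ`-dense with both parts dense. Moreover, if `x ρ s ρ y`, any `w` for which the atoms
`x → w` and `w → y` have the same truth values as for `w = s` lies `ρ`-between `x` and `y`, in the
part of `s`; Tarski–Vaught provides such a `w` in `D`. -/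

open Real Set

lemma eq_of_ratCast_sub_div_pi_eq_intCast {a b : ℚ} {n : ℤ} (h : ((a : ℝ) - b) / π = n) :
    a = b := by
  by_contra hab
  have hirr := irrational_pi.ratCast_div (sub_ne_zero.mpr hab)
  push_cast at hirr
  exact hirr.ne_int n h

lemma eq_of_exp_ratCast_mul_I_eq {a b : ℚ}
    (h : Complex.exp (a * Complex.I) = Complex.exp (b * Complex.I)) : a = b := by
  obtain ⟨n, hn⟩ := Complex.exp_eq_exp_iff_exists_int.mp h
  have hC : ((a : ℂ) - b) * Complex.I = ((2 * n : ℤ) * π : ℂ) * Complex.I := by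
    rw [sub_mul, hn]; push_cast; ring
  have hR : ((a : ℝ) - b) = (2 * n : ℤ) * π := by
    exact_mod_cast mul_right_cancel₀ Complex.I_ne_zero hC
  refine eq_of_ratCast_sub_div_pi_eq_intCast (n := 2 * n) ?_
  rw [hR, mul_div_cancel_right₀ _ pi_ne_zero]

noncomputable def halfTurn (q : ℚ) : ℤ := round ((q : ℝ) / π)

noncomputable def halfTurnOffset (q : ℚ) : ℝ := (q : ℝ) / π - halfTurn q

lemma ratCast_eq_halfTurn_add_offset_mul_pi (q : ℚ) :
    (q : ℝ) = (halfTurn q + halfTurnOffset q) * π := by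
  rw [halfTurnOffset, add_sub_cancel, div_mul_cancel₀ _ pi_ne_zero]

lemma halfTurnOffset_mem_Ioo (q : ℚ) : halfTurnOffset q ∈ Ioo (-(1 / 2)) (1 / 2) := by
  rcases eq_or_ne q 0 with rfl | hq
  · simp [halfTurnOffset, halfTurn]
  have hirr := irrational_pi.ratCast_div hq
  have hle := abs_le.mp (abs_sub_round ((q : ℝ) / π))
  have hne : ∀ ε : ℚ, halfTurnOffset q ≠ ε := fun ε he =>
    hirr.ne_rat (halfTurn q + ε) (by push_cast; rw [← he, halfTurnOffset]; ring)
  have h₁ := hne (1 / 2)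
  have h₂ := hne (-(1 / 2))
  push_cast at h₁ h₂
  exact ⟨lt_of_le_of_ne hle.1 (Ne.symm h₂), lt_of_le_of_ne hle.2 h₁⟩

lemma halfTurnOffset_injective : Function.Injective halfTurnOffset := fun a b h =>
  eq_of_ratCast_sub_div_pi_eq_intCast (n := halfTurn a - halfTurn b) <| by
    simp only [halfTurnOffset] at h
    push_cast
    rw [sub_div]
    linarith

lemma exists_halfTurn_eq_offset_mem_Ioo (n : ℤ) {u v : ℝ}
    (hu : -(1 / 2) ≤ u) (hv : v ≤ 1 / 2) (huv : u < v) :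
    ∃ c : ℚ, halfTurn c = n ∧ halfTurnOffset c ∈ Ioo u v := by
  obtain ⟨c, hc₁, hc₂⟩ :=
    exists_rat_btwn (mul_lt_mul_of_pos_left (add_lt_add_left huv (n : ℝ)) pi_pos)
  rw [mul_comm, ← lt_div_iff₀ pi_pos] at hc₁
  rw [mul_comm, ← div_lt_iff₀ pi_pos] at hc₂
  have hc : halfTurn c = n := by
    rw [halfTurn, round_eq, Int.floor_eq_iff]
    constructor <;> linarith
  refine ⟨c, hc, ?_, ?_⟩ <;> rw [halfTurnOffset, hc] <;> linarith

lemma exists_add_mem_Ioo_two_mul_iff {m : ℤ} {δ : ℝ} (hδ : δ ∈ Ioo (-1) 1) (hδ₀ : δ ≠ 0) :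
    (∃ k : ℤ, (m + δ) ∈ Ioo (2 * k : ℝ) (2 * k + 1)) ↔ (0 < δ ↔ Even m) := by
  obtain ⟨hδ₁, hδ₂⟩ := hδ
  constructor
  · rintro ⟨k, hk₁, hk₂⟩
    rcases hδ₀.lt_or_gt with hneg | hpos
    · have h₁ : 2 * k < m := by exact_mod_cast (by linarith : (2 * k : ℝ) < m)
      have h₂ : m < 2 * k + 2 := by exact_mod_cast (by linarith : (m : ℝ) < 2 * k + 2)
      simp only [hneg.not_gt, false_iff, Int.not_even_iff_odd]
      exact ⟨k, by omega⟩
    · have h₁ : 2 * k - 1 < m := by exact_mod_cast (by linarith : (2 * k - 1 : ℝ) < m)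
      have h₂ : m < 2 * k + 1 := by exact_mod_cast (by linarith : (m : ℝ) < 2 * k + 1)
      simp only [hpos, true_iff]
      exact ⟨k, by omega⟩
  · intro h
    rcases hδ₀.lt_or_gt with hneg | hpos
    · obtain ⟨k, rfl⟩ := Int.not_even_iff_odd.mp (fun he => hneg.not_gt (h.mpr he))
      exact ⟨k, by push_cast; constructor <;> linarith⟩
    · obtain ⟨k, rfl⟩ := h.mp hpos
      exact ⟨k, by push_cast; constructor <;> linarith⟩

lemma arrow2_exp_iff_exists (a b : ℚ) :
    Arrow2 (Complex.exp (a * Complex.I)) (Complex.exp (b * Complex.I)) ↔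
      ∃ k : ℤ, 2 * (k : ℝ) * π < (b : ℝ) - a ∧ (b : ℝ) - a < 2 * (k : ℝ) * π + π := by
  constructor
  · rintro ⟨a', b', ha, hb, hk⟩
    rwa [eq_of_exp_ratCast_mul_I_eq ha, eq_of_exp_ratCast_mul_I_eq hb]
  · exact fun hk => ⟨a, b, rfl, rfl, hk⟩

lemma arrow2_exp_iff (a b : ℚ) :
    Arrow2 (Complex.exp (a * Complex.I)) (Complex.exp (b * Complex.I)) ↔
      (halfTurnOffset a < halfTurnOffset b ↔ Even (halfTurn b - halfTurn a)) := by
  have hba : (b : ℝ) - a =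
      ((halfTurn b - halfTurn a : ℤ) + (halfTurnOffset b - halfTurnOffset a)) * π := by
    rw [ratCast_eq_halfTurn_add_offset_mul_pi a, ratCast_eq_halfTurn_add_offset_mul_pi b]
    push_cast; ring
  have hdiv : ∀ k : ℤ, 2 * (k : ℝ) * π < (b : ℝ) - a ∧ (b : ℝ) - a < 2 * (k : ℝ) * π + π ↔
      ((halfTurn b - halfTurn a : ℤ) + (halfTurnOffset b - halfTurnOffset a)) ∈
        Ioo (2 * k : ℝ) (2 * k + 1) := fun k => by
    rw [hba, mem_Ioo, show 2 * (k : ℝ) * π + π = (2 * k + 1) * π by ring,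
      mul_lt_mul_iff_of_pos_right pi_pos, mul_lt_mul_iff_of_pos_right pi_pos]
  rcases eq_or_ne a b with rfl | hab
  · refine iff_of_false ?_ (by simp)
    rw [arrow2_exp_iff_exists, sub_self]
    rintro ⟨k, h₁, h₂⟩
    have : (2 * k : ℝ) < 0 ∧ (0 : ℝ) < 2 * k + 1 := ⟨by nlinarith [pi_pos], by nlinarith [pi_pos]⟩
    have : 2 * k < 0 ∧ 0 < 2 * k + 1 := by exact_mod_cast this
    omega
  rw [arrow2_exp_iff_exists, exists_congr hdiv, exists_add_mem_Ioo_two_mul_iff, sub_pos]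
  · have ha := halfTurnOffset_mem_Ioo a
    have hb := halfTurnOffset_mem_Ioo b
    constructor <;> linarith [ha.1, ha.2, hb.1, hb.2]
  · exact sub_ne_zero.mpr (halfTurnOffset_injective.ne hab.symm)

lemma exp_mem_partA_iff (q : ℚ) : Complex.exp (q * Complex.I) ∈ PartA ↔ Odd (halfTurn q) := by
  have hq := ratCast_eq_halfTurn_add_offset_mul_pi q
  have ⟨ht₁, ht₂⟩ := halfTurnOffset_mem_Ioo q
  constructor
  · rintro ⟨q', hq', k, hk₁, hk₂⟩
    rw [← eq_of_exp_ratCast_mul_I_eq hq', hq] at hk₁ hk₂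
    have h₁ : 2 * k < halfTurn q := by
      exact_mod_cast (by nlinarith [pi_pos] : (2 * k : ℝ) < halfTurn q)
    have h₂ : halfTurn q < 2 * k + 2 := by
      exact_mod_cast (by nlinarith [pi_pos] : (halfTurn q : ℝ) < 2 * k + 2)
    exact ⟨k, by omega⟩
  · rintro ⟨k, hk⟩
    refine ⟨q, rfl, k, ?_, ?_⟩ <;> rw [hq, hk] <;> push_cast <;> nlinarith [pi_pos]

lemma exp_mem_partB_iff (q : ℚ) : Complex.exp (q * Complex.I) ∈ PartB ↔ Even (halfTurn q) := by
  rw [PartB, mem_sdiff, exp_mem_partA_iff, Int.not_odd_iff_even]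
  exact and_iff_right ⟨q, rfl⟩

lemma rho_exp_iff (a b : ℚ) :
    Rho (Complex.exp (a * Complex.I)) (Complex.exp (b * Complex.I)) ↔
      halfTurnOffset a < halfTurnOffset b := by
  simp only [Rho, arrow2_exp_iff, exp_mem_partA_iff, exp_mem_partB_iff, Int.even_sub,
    ← Int.not_even_iff_odd]
  rcases eq_or_ne a b with rfl | hab
  · simp
  have := lt_asymm (a := halfTurnOffset a) (b := halfTurnOffset b)
  have := (halfTurnOffset_injective.ne hab).lt_or_gt
  tauto

lemma partA_subset_scirc : PartA ⊆ Scirc := fun _ ⟨q, hq, _⟩ => ⟨q, hq⟩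

section Scirc

variable {x y z s : ℂ}

lemma arrow2_iff_rho_iff (hx : x ∈ Scirc) (hy : y ∈ Scirc) :
    Arrow2 x y ↔ (Rho x y ↔ (x ∈ PartA ↔ y ∈ PartA)) := by
  obtain ⟨a, rfl⟩ := hx
  obtain ⟨b, rfl⟩ := hy
  rw [arrow2_exp_iff, rho_exp_iff, exp_mem_partA_iff, exp_mem_partA_iff, Int.even_sub,
    ← Int.not_even_iff_odd, ← Int.not_even_iff_odd]
  tauto

lemma rho_irrefl (hx : x ∈ Scirc) : ¬ Rho x x := by
  obtain ⟨a, rfl⟩ := hx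
  exact (rho_exp_iff a a).not.mpr (lt_irrefl _)

lemma rho_trans (hx : x ∈ Scirc) (hy : y ∈ Scirc) (hz : z ∈ Scirc) :
    Rho x y → Rho y z → Rho x z := by
  obtain ⟨a, rfl⟩ := hx
  obtain ⟨b, rfl⟩ := hy
  obtain ⟨c, rfl⟩ := hz
  simp only [rho_exp_iff]
  exact lt_trans

lemma rho_or_rho_of_ne (hx : x ∈ Scirc) (hy : y ∈ Scirc) (hxy : x ≠ y) : Rho x y ∨ Rho y x := by
  obtain ⟨a, rfl⟩ := hx
  obtain ⟨b, rfl⟩ := hy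
  simp only [rho_exp_iff]
  exact (halfTurnOffset_injective.ne fun hab => hxy (by rw [hab])).lt_or_gt

lemma exists_halfTurn_eq_rho_between (hx : x ∈ Scirc) (hy : y ∈ Scirc) (hxy : Rho x y) (n : ℤ) :
    ∃ c : ℚ, halfTurn c = n ∧
      Rho x (Complex.exp (c * Complex.I)) ∧ Rho (Complex.exp (c * Complex.I)) y := by
  obtain ⟨a, rfl⟩ := hx
  obtain ⟨b, rfl⟩ := hy
  simp only [rho_exp_iff] at hxy ⊢
  obtain ⟨c, hc, hac, hcb⟩ := exists_halfTurn_eq_offset_mem_Ioo n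
    (halfTurnOffset_mem_Ioo a).1.le (halfTurnOffset_mem_Ioo b).2.le hxy
  exact ⟨c, hc, hac, hcb⟩

lemma exists_mem_partA_rho_between (hx : x ∈ Scirc) (hy : y ∈ Scirc) (hxy : Rho x y) :
    ∃ s ∈ PartA, Rho x s ∧ Rho s y := by
  obtain ⟨c, hc, hxc, hcy⟩ := exists_halfTurn_eq_rho_between hx hy hxy 1
  exact ⟨_, (exp_mem_partA_iff c).mpr (hc ▸ odd_one), hxc, hcy⟩

lemma exists_mem_partB_rho_between (hx : x ∈ Scirc) (hy : y ∈ Scirc) (hxy : Rho x y) :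
    ∃ s ∈ PartB, Rho x s ∧ Rho s y := by
  obtain ⟨c, hc, hxc, hcy⟩ := exists_halfTurn_eq_rho_between hx hy hxy 0
  exact ⟨_, (exp_mem_partB_iff c).mpr (hc ▸ Even.zero), hxc, hcy⟩

lemma rho_between_of_arrow2_iff (hx : x ∈ Scirc) (hy : y ∈ Scirc) (hz : z ∈ Scirc)
    (hs : s ∈ Scirc) (hxs : Rho x s) (hsy : Rho s y)
    (hxz : Arrow2 x z ↔ Arrow2 x s) (hzy : Arrow2 z y ↔ Arrow2 s y) :
    Rho x z ∧ Rho z y ∧ (z ∈ PartA ↔ s ∈ PartA) := by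
  rw [arrow2_iff_rho_iff hx hz, arrow2_iff_rho_iff hx hs, iff_true_left hxs] at hxz
  rw [arrow2_iff_rho_iff hz hy, arrow2_iff_rho_iff hs hy, iff_true_left hsy] at hzy
  replace hxz : Rho x z ↔ (z ∈ PartA ↔ s ∈ PartA) := by grind
  replace hzy : Rho z y ↔ (z ∈ PartA ↔ s ∈ PartA) := by grind
  have hxy := rho_trans hx hs hy hxs hsy
  have hcover : Rho x z ∨ Rho z y := by
    by_contra! h
    rcases eq_or_ne x z with rfl | hxz'
    · exact h.2 hxy
    rcases eq_or_ne z y with rfl | hzy'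
    · exact h.1 hxy
    have hzx := (rho_or_rho_of_ne hx hz hxz').resolve_left h.1
    have hyz := (rho_or_rho_of_ne hz hy hzy').resolve_left h.2
    exact rho_irrefl hx (rho_trans hx hy hx hxy (rho_trans hy hz hx hyz hzx))
  rcases hcover with h | h
  · exact ⟨h, hzy.mpr (hxz.mp h), hxz.mp h⟩
  · exact ⟨hxz.mpr (hzy.mp h), h, hzy.mp h⟩

lemma TarskiVaught2.exists_arrow2_iff {D : Set ℂ} (hTV : TarskiVaught2 D) (hx : x ∈ D)
    (hy : y ∈ D) (hs : s ∈ Scirc) :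
    ∃ z ∈ D, (Arrow2 x z ↔ Arrow2 x s) ∧ (Arrow2 z y ↔ Arrow2 s y) := by
  obtain ⟨z, hz, hθ⟩ := hTV (fun f => f 0 2 == decide (Arrow2 x s) && f 2 1 == decide (Arrow2 s y))
    x hx y hy ⟨s, hs, by simp only [QFSat, Bool.and_eq_true, beq_iff_eq]; exact ⟨rfl, rfl⟩⟩
  simp only [QFSat, Bool.and_eq_true, beq_iff_eq] at hθ
  exact ⟨z, hz, decide_eq_decide.mp hθ.1, decide_eq_decide.mp hθ.2⟩

lemma TarskiVaught2.exists_rho_between {D : Set ℂ} (hDS : D ⊆ Scirc) (hTV : TarskiVaught2 D)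
    (hx : x ∈ D) (hy : y ∈ D) (hs : s ∈ Scirc) (hxs : Rho x s) (hsy : Rho s y) :
    ∃ z ∈ D, Rho x z ∧ Rho z y ∧ (z ∈ PartA ↔ s ∈ PartA) := by
  obtain ⟨z, hz, hxz, hzy⟩ := hTV.exists_arrow2_iff hx hy hs
  exact ⟨z, hz, rho_between_of_arrow2_iff (hDS hx) (hDS hy) (hDS hz) hs hxs hsy hxz hzy⟩

end Scirc

/-- If `D ⊆ S` is (the domain of) an elementary substructure of
`S(2)`, then `⟨D, ρ↾D⟩` is a dense linear order and `A ∩ D`, `B ∩ D` are dense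
subsets of it. -/
theorem elementary_substructure_rho_dense
    (D : Set ℂ) (hDS : D ⊆ Scirc) (hTV : TarskiVaught2 D) :
    (∀ x ∈ D, ¬ Rho x x) ∧
    (∀ x ∈ D, ∀ y ∈ D, ∀ z ∈ D, Rho x y → Rho y z → Rho x z) ∧
    (∀ x ∈ D, ∀ y ∈ D, x ≠ y → Rho x y ∨ Rho y x) ∧
    (∀ x ∈ D, ∀ y ∈ D, Rho x y → ∃ z ∈ D, Rho x z ∧ Rho z y) ∧
    (∀ x ∈ D, ∀ y ∈ D, Rho x y → ∃ z ∈ PartA ∩ D, Rho x z ∧ Rho z y) ∧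
    (∀ x ∈ D, ∀ y ∈ D, Rho x y → ∃ z ∈ PartB ∩ D, Rho x z ∧ Rho z y) := by
  have denseA : ∀ x ∈ D, ∀ y ∈ D, Rho x y → ∃ z ∈ PartA ∩ D, Rho x z ∧ Rho z y := by
    intro x hx y hy hxy
    obtain ⟨s, hsA, hxs, hsy⟩ := exists_mem_partA_rho_between (hDS hx) (hDS hy) hxy
    obtain ⟨z, hz, hxz, hzy, hzA⟩ :=
      hTV.exists_rho_between hDS hx hy (partA_subset_scirc hsA) hxs hsy
    exact ⟨z, ⟨hzA.mpr hsA, hz⟩, hxz, hzy⟩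
  refine ⟨fun x hx => rho_irrefl (hDS hx),
    fun x hx y hy z hz => rho_trans (hDS hx) (hDS hy) (hDS hz),
    fun x hx y hy => rho_or_rho_of_ne (hDS hx) (hDS hy),
    fun x hx y hy hxy => ?_, denseA, ?_⟩
  · obtain ⟨z, hz, hxz, hzy⟩ := denseA x hx y hy hxy
    exact ⟨z, hz.2, hxz, hzy⟩
  · intro x hx y hy hxy
    obtain ⟨s, hsB, hxs, hsy⟩ := exists_mem_partB_rho_between (hDS hx) (hDS hy) hxy
    obtain ⟨z, hz, hxz, hzy, hzA⟩ := hTV.exists_rho_between hDS hx hy hsB.1 hxs hsy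
    exact ⟨z, ⟨⟨hDS hz, fun h => hsB.2 (hzA.mp h)⟩, hz⟩, hxz, hzy⟩
end
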